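/- arXiv:1307.3484 — 2 statements merged into one kernel-verified Lean document; each statement's English description precedes it below -/
import Mathlib

section
/- Let q ≥ 3 be a power of a prime and n ≥ 1. The graph whose vertex set is HGL_n(F_{q²}) and in which two distinct vertices A, B are joined by an edge exactly when rank(A − B) = 1 is connected. -/
open Matrix

/-- Conjugate transpose with respect to the involution `x ↦ x ^ q` on `F = F_{q²}`. -/
def ctrans (q : ℕ) {F : Type*} [Field F] {m n : Type*} (A : Matrix m n F) : Matrix n m F :=
  Matrix.of fun i j => (A j i) ^ q

/-- `A` is hermitian with respect to the involution `x ↦ x ^ q`. -/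
def IsHerm (q : ℕ) {F : Type*} [Field F] {n : Type*} (A : Matrix n n F) : Prop :=
  ctrans q A = A

/-- The rank-one hermitian matrix `x x*`. -/
def outerq (q : ℕ) {F : Type*} [Field F] {n : Type*} (x : n → F) : Matrix n n F :=
  Matrix.of fun i j => x i * (x j) ^ q

/-- The set `{A + λ x x* : λ ∈ F_q, λ ≠ 0}` (the fixed field `F_q` is `{λ : λ ^ q = λ}`). -/
def leafSet (q : ℕ) {F : Type*} [Field F] {n : Type*} (A : Matrix n n F) (x : n → F) :
    Set (Matrix n n F) :=
  {B | ∃ lam : F, lam ^ q = lam ∧ lam ≠ 0 ∧ B = A + lam • outerq q x}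

/-- `L` is a leaf of the hermitian matrix `A`: it is of the form
`{A + λ x x* : λ ∈ F_q, λ ≠ 0}` for a nonzero vector `x` and all of its members have
rank `rank A + 1`. -/
def IsLeafOf (q : ℕ) {F : Type*} [Field F] {n : Type*} [Fintype n] (L : Set (Matrix n n F))
    (A : Matrix n n F) : Prop :=
  ∃ x : n → F, x ≠ 0 ∧ L = leafSet q A x ∧ ∀ B ∈ L, B.rank = A.rank + 1

/-!
Fix invertible hermitian `A ≠ B` and put `M = A - B`, `N = M B⁻¹ A = A B⁻¹ A - A`; both are
nonzero hermitian. If `v` is anisotropic for both (`c = v* M v ≠ 0`, `v* N v ≠ 0`), then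
`C = B + c⁻¹ (M v)(M v)*` is hermitian, differs from `B` by a rank-one matrix, is invertible by the
matrix determinant lemma (`det C = c⁻¹ (v* N v) det B`), and `A - C` has smaller rank than `A - B`
(Wedderburn rank reduction). Induction on `rank (A - B)` then connects `A` to `B`.

Such a common anisotropic vector exists over `F_{q²}` when `q ≥ 3`: with `u` anisotropic for `M`
and `w` for `N`, both forms restricted to the line `u + t w` are nonzero polynomials in `t` of degree
at most `q + 1`, and their product, of degree at most `2q + 2 < q²`, has a non-root in `F_{q²}`.
-/

open Polynomial

namespace Matrix

section Rank

variable {K : Type*} [Field K] {m n : Type*} [Fintype n]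

theorem rank_eq_zero_iff {M : Matrix m n K} : M.rank = 0 ↔ M = 0 := by
  classical
  rw [rank, Submodule.finrank_eq_zero, LinearMap.range_eq_bot, ← toLin'_apply',
    LinearEquiv.map_eq_zero_iff]

theorem rank_vecMulVec_of_ne_zero {w : m → K} {v : n → K} (hw : w ≠ 0) (hv : v ≠ 0) :
    (vecMulVec w v).rank = 1 := by
  refine le_antisymm (rank_vecMulVec_le w v) (Nat.one_le_iff_ne_zero.mpr fun h ↦ ?_)
  obtain ⟨i, hi⟩ := Function.ne_iff.mp hw
  obtain ⟨j, hj⟩ := Function.ne_iff.mp hv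
  exact mul_ne_zero hi hj (congrFun₂ (rank_eq_zero_iff.mp h) i j)

theorem rank_lt_rank_of_ker_lt {M M' : Matrix m n K}
    (h : LinearMap.ker M.mulVecLin < LinearMap.ker M'.mulVecLin) : M'.rank < M.rank := by
  have := LinearMap.finrank_range_add_finrank_ker M.mulVecLin
  have := LinearMap.finrank_range_add_finrank_ker M'.mulVecLin
  have := Submodule.finrank_lt_finrank_of_lt h
  rw [rank, rank]
  omega

theorem rank_sub_vecMulVec_lt [Fintype m] {M : Matrix m n K} {u : m → K} {v : n → K}
    (h : u ⬝ᵥ M *ᵥ v ≠ 0) :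
    (M - vecMulVec ((u ⬝ᵥ M *ᵥ v)⁻¹ • M *ᵥ v) (u ᵥ* M)).rank < M.rank := by
  have hw (w : n → K) : (M - vecMulVec ((u ⬝ᵥ M *ᵥ v)⁻¹ • M *ᵥ v) (u ᵥ* M)) *ᵥ w =
      M *ᵥ w - (u ⬝ᵥ M *ᵥ w) • (u ⬝ᵥ M *ᵥ v)⁻¹ • M *ᵥ v := by
    rw [sub_mulVec, vecMulVec_mulVec, op_smul_eq_smul, ← dotProduct_mulVec]
  refine rank_lt_rank_of_ker_lt <| SetLike.lt_iff_le_and_exists.mpr ⟨fun w hw0 ↦ ?_, v, ?_, ?_⟩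
  · simp only [LinearMap.mem_ker, mulVecLin_apply, hw] at hw0 ⊢
    simp [hw0]
  all_goals simp only [LinearMap.mem_ker, mulVecLin_apply, hw]
  · rw [smul_smul, mul_inv_cancel₀ h, one_smul, sub_self]
  · exact fun hv ↦ h (by rw [hv, dotProduct_zero])

theorem det_add_vecMulVec [DecidableEq n] {B : Matrix n n K} (hB : IsUnit B.det) (u v : n → K) :
    (B + vecMulVec u v).det = B.det * (1 + v ⬝ᵥ B⁻¹ *ᵥ u) := by
  rw [vecMulVec_eq Unit, det_add_replicateCol_mul_replicateRow hB,
    det_unique (1 + _ : Matrix Unit Unit K), add_apply, one_apply_eq, Matrix.mul_assoc,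
    ← replicateCol_mulVec, replicateRow_mul_replicateCol_apply]

end Rank

section Hermitian

variable {K : Type*} [Field K] [StarRing K] {n : Type*} [Fintype n] {M : Matrix n n K}

theorem IsHermitian.star_mulVec_dotProduct (hM : M.IsHermitian) (v w : n → K) :
    star (M *ᵥ v) ⬝ᵥ w = star v ⬝ᵥ M *ᵥ w := by
  rw [star_mulVec, ← dotProduct_mulVec, hM.eq]

theorem IsHermitian.star_star_dotProduct_mulVec_self (hM : M.IsHermitian) (v : n → K) :
    star (star v ⬝ᵥ M *ᵥ v) = star v ⬝ᵥ M *ᵥ v := by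
  rw [← star_dotProduct, hM.star_mulVec_dotProduct]

theorem IsHermitian.star_dotProduct_mulVec_add_smul (hM : M.IsHermitian) (u w : n → K) (t : K) :
    star (u + t • w) ⬝ᵥ M *ᵥ (u + t • w) =
      star u ⬝ᵥ M *ᵥ u + t * (star u ⬝ᵥ M *ᵥ w) + star t * star (star u ⬝ᵥ M *ᵥ w)
        + star t * t * (star w ⬝ᵥ M *ᵥ w) := by
  rw [← star_dotProduct, hM.star_mulVec_dotProduct]
  simp only [star_add, star_smul, mulVec_add, mulVec_smul, dotProduct_add, add_dotProduct,
    dotProduct_smul, smul_dotProduct, smul_eq_mul]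
  ring

variable [DecidableEq n]

theorem IsHermitian.exists_star_dotProduct_mulVec_self_ne_zero (hK : ∃ s : K, star s ≠ s)
    (hM : M.IsHermitian) (hM0 : M ≠ 0) : ∃ v, star v ⬝ᵥ M *ᵥ v ≠ 0 := by
  by_contra! h
  obtain ⟨s, hs⟩ := hK
  have hform (u w : n → K) : star u ⬝ᵥ M *ᵥ w = 0 := by
    have h1 := hM.star_dotProduct_mulVec_add_smul u w 1
    have h2 := hM.star_dotProduct_mulVec_add_smul u w s
    simp only [h, star_one, one_mul, zero_add, add_zero, mul_zero] at h1 h2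
    have : (s - star s) * (star u ⬝ᵥ M *ᵥ w) = 0 := by linear_combination -h2 + star s * h1
    exact (mul_eq_zero.mp this).resolve_left (sub_ne_zero.mpr (Ne.symm hs))
  exact hM0 <| Matrix.ext fun i j ↦ by simpa using hform (Pi.single i 1) (Pi.single j 1)

theorem IsHermitian.sub_mul_inv_mul {A B : Matrix n n K} (hA : A.IsHermitian)
    (hB : B.IsHermitian) (hBu : IsUnit B) : ((A - B) * B⁻¹ * A).IsHermitian := by
  rw [Matrix.sub_mul, Matrix.sub_mul, mul_nonsing_inv _ ((isUnit_iff_isUnit_det B).mp hBu),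
    Matrix.one_mul]
  have := isHermitian_conjTranspose_mul_mul A hB.inv
  rw [hA.eq] at this
  exact this.sub hA

theorem IsHermitian.exists_rank_one_step {A B : Matrix n n K} (hA : A.IsHermitian)
    (hB : B.IsHermitian) (hBu : IsUnit B) {v : n → K} (hvM : star v ⬝ᵥ (A - B) *ᵥ v ≠ 0)
    (hvN : star v ⬝ᵥ ((A - B) * B⁻¹ * A) *ᵥ v ≠ 0) :
    ∃ C : Matrix n n K, C.IsHermitian ∧ IsUnit C ∧ (C - B).rank = 1 ∧
      (A - C).rank < (A - B).rank := by
  set M := A - B with hM_def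
  set c := star v ⬝ᵥ M *ᵥ v
  set x := M *ᵥ v
  have hMh : M.IsHermitian := hA.sub hB
  have hx : x ≠ 0 := fun h ↦ hvM (show star v ⬝ᵥ x = 0 by rw [h, dotProduct_zero])
  have hstar_x : star x = star v ᵥ* M := by rw [star_mulVec, hMh.eq]
  have hBdet := (isUnit_iff_isUnit_det B).mp hBu
  have hxBx : star x ⬝ᵥ B⁻¹ *ᵥ x = star v ⬝ᵥ (M * B⁻¹ * A) *ᵥ v - c := by
    have : M * B⁻¹ * M = M * B⁻¹ * A - M := by
      rw [hM_def, Matrix.mul_sub (_ * _), Matrix.mul_assoc _ B⁻¹ B, nonsing_inv_mul _ hBdet,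
        Matrix.mul_one]
    rw [hstar_x, ← dotProduct_mulVec, mulVec_mulVec, mulVec_mulVec, this, sub_mulVec,
      dotProduct_sub]
  refine ⟨B + vecMulVec (c⁻¹ • x) (star x), hB.add ?_, ?_, ?_, ?_⟩
  · rw [IsHermitian, conjTranspose_vecMulVec, star_star, star_smul, star_inv₀,
      hMh.star_star_dotProduct_mulVec_self, vecMulVec_smul, smul_vecMulVec]
  · rw [isUnit_iff_isUnit_det, det_add_vecMulVec hBdet, mulVec_smul, dotProduct_smul, hxBx,
      smul_eq_mul]
    refine hBdet.mul (isUnit_iff_ne_zero.mpr ?_)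
    rw [show 1 + c⁻¹ * (star v ⬝ᵥ (M * B⁻¹ * A) *ᵥ v - c) = c⁻¹ * star v ⬝ᵥ (M * B⁻¹ * A) *ᵥ v by
      field_simp; ring]
    exact mul_ne_zero (inv_ne_zero hvM) hvN
  · rw [add_sub_cancel_left]
    exact rank_vecMulVec_of_ne_zero (smul_ne_zero (inv_ne_zero hvM) hx) (star_ne_zero.mpr hx)
  · rw [sub_add_eq_sub_sub, hstar_x]
    exact rank_sub_vecMulVec_lt hvM

end Hermitian

end Matrix

section FiniteField

variable {K : Type*} [Field K] [StarRing K] {n : Type*} [Fintype n] {q : ℕ}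

theorem exists_star_ne_self_of_card_eq_sq [Fintype K] (hstar : ∀ x : K, star x = x ^ q)
    (hq : 2 ≤ q) (hK : Fintype.card K = q ^ 2) : ∃ s : K, star s ≠ s := by
  obtain ⟨s, hs⟩ := exists_eval_ne_zero_of_natDegree_lt_card _
    (FiniteField.X_pow_card_sub_X_ne_zero K (by omega : 1 < q))
    (by rw [FiniteField.X_pow_card_sub_X_natDegree_eq K (by omega), Cardinal.mk_fintype, hK]
        norm_cast
        nlinarith)
  exact ⟨s, by simpa [hstar, sub_eq_zero] using hs⟩

theorem Matrix.IsHermitian.exists_polynomial_eval_eq {M : Matrix n n K}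
    (hstar : ∀ x : K, star x = x ^ q) (hq : q ≠ 0) (hM : M.IsHermitian) (u w : n → K)
    (h : star u ⬝ᵥ M *ᵥ u ≠ 0 ∨ star w ⬝ᵥ M *ᵥ w ≠ 0) :
    ∃ P : K[X], P ≠ 0 ∧ P.natDegree ≤ q + 1 ∧
      ∀ t, P.eval t = star (u + t • w) ⬝ᵥ M *ᵥ (u + t • w) := by
  set a := star u ⬝ᵥ M *ᵥ u
  set b := star u ⬝ᵥ M *ᵥ w
  set e := star w ⬝ᵥ M *ᵥ w
  refine ⟨C a + C b * X + C (star b) * X ^ q + C e * X ^ (q + 1), fun hP ↦ ?_, by compute_degree,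
    fun t ↦ ?_⟩
  · rcases h with h | h
    · exact h (by simpa [coeff_X, coeff_X_pow, hq.symm] using congrArg (coeff · 0) hP)
    · exact h (by simpa [coeff_X, coeff_X_pow, coeff_C, hq] using congrArg (coeff · (q + 1)) hP)
  · rw [hM.star_dotProduct_mulVec_add_smul, hstar t]
    simp only [eval_add, eval_mul, eval_C, eval_X, eval_pow]
    ring

theorem Matrix.IsHermitian.exists_common_anisotropic [Fintype K] [DecidableEq n]
    (hstar : ∀ x : K, star x = x ^ q) (hq : 3 ≤ q) (hK : Fintype.card K = q ^ 2)
    {M N : Matrix n n K} (hM : M.IsHermitian) (hN : N.IsHermitian) (hM0 : M ≠ 0) (hN0 : N ≠ 0) :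
    ∃ v, star v ⬝ᵥ M *ᵥ v ≠ 0 ∧ star v ⬝ᵥ N *ᵥ v ≠ 0 := by
  have hK' := exists_star_ne_self_of_card_eq_sq hstar (by omega) hK
  obtain ⟨u, hu⟩ := hM.exists_star_dotProduct_mulVec_self_ne_zero hK' hM0
  obtain ⟨w, hw⟩ := hN.exists_star_dotProduct_mulVec_self_ne_zero hK' hN0
  obtain ⟨P, hP0, hPdeg, hP⟩ := hM.exists_polynomial_eval_eq hstar (by omega) u w (.inl hu)
  obtain ⟨R, hR0, hRdeg, hR⟩ := hN.exists_polynomial_eval_eq hstar (by omega) u w (.inr hw)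
  obtain ⟨t, ht⟩ := exists_eval_ne_zero_of_natDegree_lt_card _ (mul_ne_zero hP0 hR0) <| by
    rw [Cardinal.mk_fintype, hK]
    have := natDegree_mul_le (p := P) (q := R)
    norm_cast
    nlinarith
  rw [eval_mul, hP, hR] at ht
  exact ⟨u + t • w, left_ne_zero_of_mul ht, right_ne_zero_of_mul ht⟩

end FiniteField

section Graph

variable (n K : Type*) [Field K] [StarRing K] [Fintype n] [DecidableEq n]

def hermitianRankOneGraph : SimpleGraph {A : Matrix n n K // A.IsHermitian ∧ IsUnit A} :=
  SimpleGraph.fromRel fun A B ↦ (A.1 - B.1).rank = 1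

variable {n K}

theorem hermitianRankOneGraph_connected
    (hanis : ∀ M N : Matrix n n K, M.IsHermitian → N.IsHermitian → M ≠ 0 → N ≠ 0 →
      ∃ v, star v ⬝ᵥ M *ᵥ v ≠ 0 ∧ star v ⬝ᵥ N *ᵥ v ≠ 0) :
    (hermitianRankOneGraph n K).Connected := by
  refine (SimpleGraph.connected_iff _).mpr ⟨fun A B ↦ ?_, ⟨⟨1, isHermitian_one, isUnit_one⟩⟩⟩
  induction hr : (A.1 - B.1).rank using Nat.strong_induction_on generalizing B with
  | _ r ih =>
  by_cases hAB : A = B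
  · exact hAB ▸ .refl _
  obtain ⟨A, hA, hAu⟩ := A
  obtain ⟨B, hB, hBu⟩ := B
  have hM0 : A - B ≠ 0 := sub_ne_zero.mpr fun h ↦ hAB (Subtype.ext h)
  have hN0 : (A - B) * B⁻¹ * A ≠ 0 := by
    rwa [Matrix.mul_assoc, Ne, ((isUnit_nonsing_inv_iff.mpr hBu).mul hAu).mul_left_eq_zero]
  obtain ⟨v, hvM, hvN⟩ := hanis _ _ (hA.sub hB) (hA.sub_mul_inv_mul hB hBu) hM0 hN0
  obtain ⟨C, hC, hCu, hCB, hAC⟩ := hA.exists_rank_one_step hB hBu hvM hvN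
  have hadj : (hermitianRankOneGraph n K).Adj ⟨C, hC, hCu⟩ ⟨B, hB, hBu⟩ := by
    refine (SimpleGraph.fromRel_adj _ _ _).mpr ⟨fun he ↦ ?_, .inl hCB⟩
    rw [show C = B from congrArg Subtype.val he, sub_self, rank_zero] at hCB
    exact zero_ne_one hCB
  exact (ih _ (hr ▸ hAC) ⟨C, hC, hCu⟩ rfl).trans hadj.reachable

end Graph

section PowStar

variable {F : Type*} [Field F] [Fintype F] {q : ℕ}

theorem add_pow_of_card_eq_pow (hq : IsPrimePow q) {e : ℕ} (hF : Fintype.card F = q ^ e)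
    (x y : F) : (x + y) ^ q = x ^ q + y ^ q := by
  obtain ⟨p, k, hp, -, rfl⟩ := hq
  have := Fact.mk hp.nat_prime
  have : CharP F p := charP_of_card_eq_prime_pow (f := k * e) (by rw [hF, pow_mul])
  exact add_pow_char_pow x y p k

theorem pow_pow_of_card_eq_sq (hF : Fintype.card F = q ^ 2) (x : F) : (x ^ q) ^ q = x := by
  rw [← pow_mul, ← sq, ← hF, FiniteField.pow_card]

variable (F) in
abbrev powStarRing (hq : IsPrimePow q) (hF : Fintype.card F = q ^ 2) : StarRing F where
  star x := x ^ q
  star_involutive := pow_pow_of_card_eq_sq hF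
  star_mul x y := by rw [mul_pow, mul_comm]
  star_add := add_pow_of_card_eq_pow hq hF

end PowStar

theorem stmt5_general (q n : ℕ) (hq : IsPrimePow q) (hq3 : 3 ≤ q)
    (F : Type*) [Field F] [Fintype F] (hF : Fintype.card F = q ^ 2) :
    (SimpleGraph.fromRel
      (fun A B : {A : Matrix (Fin n) (Fin n) F // IsHerm q A ∧ IsUnit A} =>
        (A.1 - B.1).rank = 1)).Connected := by
  -- for this star structure `IsHerm q A` is `A.IsHermitian` by definition
  let := powStarRing F hq hF
  exact hermitianRankOneGraph_connected fun _ _ hM hN hM0 hN0 ↦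
    hM.exists_common_anisotropic (fun _ ↦ rfl) hq3 hF hN hM0 hN0

/-- **Lemma 2.5.** For a prime power `q ≥ 3` and `n ≥ 1`, the graph on the invertible
hermitian `n × n` matrices over `F_{q²}`, with edges given by `rank (A - B) = 1`,
is connected. -/
theorem stmt5 (q n : ℕ) (hq : IsPrimePow q) (hq3 : 3 ≤ q) (hn : 1 ≤ n)
    (F : Type*) [Field F] [Fintype F] (hF : Fintype.card F = q ^ 2) :
    (SimpleGraph.fromRel
      (fun A B : {A : Matrix (Fin n) (Fin n) F // IsHerm q A ∧ IsUnit A} =>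
        (A.1 - B.1).rank = 1)).Connected :=
  stmt5_general q n hq hq3 F hF
end

section
/- Let A = P(E₁₁ + ⋯ + E_{n−1,n−1})P* for an invertible n×n matrix P over F_{q²} (so A is hermitian of rank n − 1), let x = P(y₁, …, yₙ)ᵀ with yₙ ≠ 0, and set z = (−y₁/yₙ, …, −y_{n−1}/yₙ)ᵀ ∈ F_{q²}^{n−1}. Then for every λ ∈ F_q with λ ≠ 0, the matrix A + λ x x* is invertible and (A + λ x x*)⁻¹ = (P⁻¹)* · [[I_{n−1}, z],[z*, z*z + (λ yₙ ȳₙ)⁻¹]] · P⁻¹, written in block form with upper-left (n−1)×(n−1) block I_{n−1}. Moreover, if q ≥ 3 and L = {A + λ x x* : λ ∈ F_q, λ ≠ 0} is a leaf of A, then L⁻¹ = {C⁻¹ : C ∈ L} is a leaf of the rank n−1 matrix (P⁻¹)* · [[I_{n−1}, z],[z*, z*z]] · P⁻¹, namely L⁻¹ = {(P⁻¹)*[[I_{n−1}, z],[z*, z*z]]P⁻¹ + μ w w* : μ ∈ F_q, μ ≠ 0} where w = (P⁻¹)* eₙ and eₙ = (0,…,0,1)ᵀ. -/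
open Matrix

/-- The block matrix `[[I_{n−1}, z], [z*, z*z + c]]` (indices `Fin m ⊕ Unit`, `m = n − 1`). -/
def blkMat (q m : ℕ) {F : Type*} [Field F] (z : Fin m → F) (c : F) :
    Matrix (Fin m ⊕ Unit) (Fin m ⊕ Unit) F :=
  Matrix.fromBlocks (1 : Matrix (Fin m) (Fin m) F)
    (Matrix.of fun i (_ : Unit) => z i)
    (Matrix.of fun (_ : Unit) j => (z j) ^ q)
    (Matrix.of fun (_ : Unit) (_ : Unit) => (∑ i, (z i) ^ q * z i) + c)

/-
With `S = [[I, z], [0, 1]]` and `D = diag(1, …, 1, 0)` one has `y = yₙ S⁻¹ eₙ` and `S⁻¹ D S⁻¹* = D`,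
so `D + λ y y* = S⁻¹ diag(1, …, 1, c) S⁻¹*` with `c = λ yₙ ȳₙ`, while the block matrix
`[[I, z], [z*, z*z + c']]` is `S* diag(1, …, 1, c') S`. Since `A + λ x x* = P (D + λ y y*) P*`,
its inverse is `(P⁻¹)* S* diag(1, …, 1, c⁻¹) S P⁻¹`. Splitting off `c⁻¹ eₙ eₙ*` from the diagonal
writes these inverses as `N + c⁻¹ w w*`, and as `yₙ ȳₙ ∈ F_q^×`, the map `λ ↦ (λ yₙ ȳₙ)⁻¹`
permutes `F_q^×`, so the inverses form the leaf of `N` through `w`.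
-/

theorem exists_ringHom_eq_pow_of_card_eq_sq {q : ℕ} {F : Type*} [Field F] [Fintype F]
    (hF : Fintype.card F = q ^ 2) : ∃ σ : F →+* F, ∀ a, σ a = a ^ q := by
  obtain ⟨n, hp, hn⟩ := FiniteField.card F (ringChar F)
  obtain ⟨k, -, rfl⟩ : ∃ k ≤ (n : ℕ), q = ringChar F ^ k :=
    (Nat.dvd_prime_pow hp).1 (hn ▸ hF ▸ dvd_pow_self q two_ne_zero)
  have : Fact (ringChar F).Prime := ⟨hp⟩
  exact ⟨iterateFrobenius F (ringChar F) k, iterateFrobenius_def _ _⟩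

theorem pow_pow_eq_self_of_card_eq_sq {q : ℕ} {F : Type*} [Field F] [Fintype F]
    (hF : Fintype.card F = q ^ 2) (a : F) : (a ^ q) ^ q = a := by
  rw [← pow_mul, ← sq, ← hF, FiniteField.pow_card]

section ctrans

variable {q : ℕ} {F : Type*} [Field F] {σ : F →+* F} {l m n : Type*}

theorem ctrans_eq_transpose_map (hσ : ∀ a, σ a = a ^ q) (A : Matrix m n F) :
    ctrans q A = (A.map σ)ᵀ := by
  ext i j
  simp [ctrans, hσ]

theorem ctrans_mul [Fintype m] (hσ : ∀ a, σ a = a ^ q) (A : Matrix l m F) (B : Matrix m n F) :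
    ctrans q (A * B) = ctrans q B * ctrans q A := by
  simp only [ctrans_eq_transpose_map hσ, Matrix.map_mul, transpose_mul]

theorem ctrans_one [DecidableEq n] (hσ : ∀ a, σ a = a ^ q) :
    ctrans q (1 : Matrix n n F) = 1 := by
  rw [ctrans_eq_transpose_map hσ, Matrix.map_one _ σ.map_zero σ.map_one, transpose_one]

theorem ctrans_ctrans (hq : ∀ a : F, (a ^ q) ^ q = a) (A : Matrix m n F) :
    ctrans q (ctrans q A) = A := by
  ext i j
  simp [ctrans, hq]

theorem ctrans_fromBlocks (hσ : ∀ a, σ a = a ^ q) {o : Type*} (A : Matrix n l F)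
    (B : Matrix n m F) (C : Matrix o l F) (D : Matrix o m F) :
    ctrans q (fromBlocks A B C D) =
      fromBlocks (ctrans q A) (ctrans q C) (ctrans q B) (ctrans q D) := by
  simp only [ctrans_eq_transpose_map hσ, fromBlocks_map, fromBlocks_transpose]

theorem isUnit_det_ctrans [Fintype n] [DecidableEq n] (hσ : ∀ a, σ a = a ^ q)
    {Q : Matrix n n F} (hQ : IsUnit Q.det) : IsUnit (ctrans q Q).det := by
  rw [ctrans_eq_transpose_map hσ, det_transpose]
  exact σ.map_det Q ▸ hQ.map σ

theorem outerq_eq_mul_ctrans (x : n → F) :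
    outerq q x = replicateCol Unit x * ctrans q (replicateCol Unit x) := by
  ext i j
  simp [outerq, ctrans, mul_apply]

theorem outerq_mulVec [Fintype m] (hσ : ∀ a, σ a = a ^ q) (P : Matrix n m F) (y : m → F) :
    outerq q (P *ᵥ y) = P * outerq q y * ctrans q P := by
  rw [outerq_eq_mul_ctrans, outerq_eq_mul_ctrans, replicateCol_mulVec, ctrans_mul hσ,
    Matrix.mul_assoc, Matrix.mul_assoc, Matrix.mul_assoc]

theorem outerq_smul (c : F) (x : n → F) : outerq q (c • x) = (c * c ^ q) • outerq q x := by
  ext i j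
  simp only [outerq, Pi.smul_apply, smul_eq_mul, mul_pow, of_apply, Matrix.smul_apply]
  ring

end ctrans

section blocks

variable {q m : ℕ} {F : Type*} [Field F] {σ : F →+* F}

def shear (z : Fin m → F) : Matrix (Fin m ⊕ Unit) (Fin m ⊕ Unit) F :=
  fromBlocks 1 (of fun i (_ : Unit) => z i) 0 1

def diagLast (m : ℕ) (c : F) : Matrix (Fin m ⊕ Unit) (Fin m ⊕ Unit) F :=
  diagonal (Sum.elim 1 fun _ => c)

theorem diagLast_zero : diagLast m (0 : F) = fromBlocks 1 0 0 0 := by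
  simp [diagLast, ← fromBlocks_diagonal]

theorem diagLast_mul_diagLast_inv {c : F} (hc : c ≠ 0) :
    diagLast m c * diagLast m c⁻¹ = 1 := by
  rw [diagLast, diagLast, diagonal_mul_diagonal, ← diagonal_one]
  congr 1
  ext (i | i) <;> simp [hc]

theorem shear_mul_shear_neg (z : Fin m → F) : shear z * shear (-z) = 1 := by
  rw [shear, shear, fromBlocks_multiply, ← fromBlocks_one]
  congr 1 <;> ext <;> simp

theorem ctrans_shear (hσ : ∀ a, σ a = a ^ q) (z : Fin m → F) :
    ctrans q (shear z) = fromBlocks 1 0 (of fun _ j => z j ^ q) 1 := by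
  simp only [shear, ctrans_fromBlocks hσ, ctrans_one hσ]
  congr
  ext i j
  simp [ctrans, ← hσ]

theorem blkMat_eq_ctrans_shear_mul (hσ : ∀ a, σ a = a ^ q) (z : Fin m → F) (c : F) :
    blkMat q m z c = ctrans q (shear z) * diagLast m c * shear z := by
  rw [ctrans_shear hσ, diagLast, ← fromBlocks_diagonal, shear]
  simp only [fromBlocks_multiply]
  ext (i | i) (j | j) <;> simp [blkMat, mul_apply]

theorem shear_mul_diagLast_zero_mul_ctrans (hσ : ∀ a, σ a = a ^ q) (z : Fin m → F) :
    shear z * diagLast m 0 * ctrans q (shear z) = diagLast m 0 := by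
  rw [ctrans_shear hσ, diagLast_zero, shear]
  simp [fromBlocks_multiply]

theorem diagLast_eq_add_smul_outerq (hσ : ∀ a, σ a = a ^ q) (c : F) :
    diagLast m c = diagLast m 0 + c • outerq q (Pi.single (Sum.inr ()) 1) := by
  ext (i | i) (j | j) <;> simp [diagLast, outerq, ← hσ, diagonal_apply]

theorem blkMat_eq_add_smul_outerq (hσ : ∀ a, σ a = a ^ q) (z : Fin m → F) (c : F) :
    blkMat q m z c = blkMat q m z 0 + c • outerq q (Pi.single (Sum.inr ()) 1) := by
  ext (i | i) (j | j) <;> simp [blkMat, outerq, ← hσ]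

theorem eq_smul_shear_neg_mulVec_single {y : Fin m ⊕ Unit → F} (hyn : y (Sum.inr ()) ≠ 0)
    {z : Fin m → F} (hz : ∀ i, z i = -y (Sum.inl i) / y (Sum.inr ())) :
    y = y (Sum.inr ()) • (shear (-z) *ᵥ Pi.single (Sum.inr ()) 1) := by
  ext (i | i) <;> simp [shear, mulVec_single, hz, mul_div_cancel₀ _ hyn]

theorem isUnit_det_shear (z : Fin m → F) : IsUnit (shear z).det := by
  simp [shear]

theorem rank_diagLast_zero : (diagLast m (0 : F)).rank = m := by
  classical
  rw [diagLast, rank_diagonal, Fintype.card_congr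
    ((Equiv.subtypeEquivRight fun i => ?_).trans Equiv.sumIsLeft), Fintype.card_fin]
  cases i <;> simp

end blocks

section inverse

variable {q m : ℕ} {F : Type*} [Field F] {σ : F →+* F} {y : Fin m ⊕ Unit → F}
  {z : Fin m → F}

theorem diagLast_zero_add_smul_outerq (hσ : ∀ a, σ a = a ^ q) (hyn : y (Sum.inr ()) ≠ 0)
    (hz : ∀ i, z i = -y (Sum.inl i) / y (Sum.inr ())) (lam : F) :
    diagLast m 0 + lam • outerq q y =
      shear (-z) * diagLast m (lam * (y (Sum.inr ()) * y (Sum.inr ()) ^ q)) *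
        ctrans q (shear (-z)) := by
  conv_lhs => rw [eq_smul_shear_neg_mulVec_single hyn hz]
  rw [diagLast_eq_add_smul_outerq hσ (lam * _), Matrix.mul_add, Matrix.add_mul,
    shear_mul_diagLast_zero_mul_ctrans hσ, outerq_smul, outerq_mulVec hσ, smul_smul,
    Matrix.mul_smul, Matrix.smul_mul]

theorem diagLast_zero_add_smul_outerq_mul_blkMat (hσ : ∀ a, σ a = a ^ q)
    (hyn : y (Sum.inr ()) ≠ 0) (hz : ∀ i, z i = -y (Sum.inl i) / y (Sum.inr ())) {lam : F}
    (hlam : lam ≠ 0) :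
    (diagLast m 0 + lam • outerq q y) *
      blkMat q m z (lam * (y (Sum.inr ()) * y (Sum.inr ()) ^ q))⁻¹ = 1 := by
  have hS : ctrans q (shear (-z)) * ctrans q (shear z) = 1 := by
    rw [← ctrans_mul hσ, shear_mul_shear_neg, ctrans_one hσ]
  rw [diagLast_zero_add_smul_outerq hσ hyn hz, blkMat_eq_ctrans_shear_mul hσ]
  set c := lam * (y (Sum.inr ()) * y (Sum.inr ()) ^ q)
  have hc : c ≠ 0 := mul_ne_zero hlam (mul_ne_zero hyn (pow_ne_zero _ hyn))
  calc _ = shear (-z) * (diagLast m c * (ctrans q (shear (-z)) * ctrans q (shear z)) *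
        diagLast m c⁻¹) * shear z := by simp only [Matrix.mul_assoc]
    _ = 1 := by
      rw [hS, Matrix.mul_one, diagLast_mul_diagLast_inv hc, Matrix.mul_one]
      simpa using shear_mul_shear_neg (-z)

theorem add_smul_outerq_mulVec_mul_eq_one (hσ : ∀ a, σ a = a ^ q)
    {P : Matrix (Fin m ⊕ Unit) (Fin m ⊕ Unit) F} (hP : IsUnit P.det)
    (hyn : y (Sum.inr ()) ≠ 0) (hz : ∀ i, z i = -y (Sum.inl i) / y (Sum.inr ())) {lam : F}
    (hlam : lam ≠ 0) :
    (P * diagLast m 0 * ctrans q P + lam • outerq q (P *ᵥ y)) *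
      (ctrans q P⁻¹ * blkMat q m z (lam * (y (Sum.inr ()) * y (Sum.inr ()) ^ q))⁻¹ * P⁻¹) =
      1 := by
  have hPP : ctrans q P * ctrans q P⁻¹ = 1 := by
    rw [← ctrans_mul hσ, nonsing_inv_mul _ hP, ctrans_one hσ]
  rw [outerq_mulVec hσ, ← Matrix.smul_mul, ← Matrix.mul_smul, ← Matrix.add_mul,
    ← Matrix.mul_add]
  calc _ = P * ((diagLast m 0 + lam • outerq q y) *
        blkMat q m z (lam * (y (Sum.inr ()) * y (Sum.inr ()) ^ q))⁻¹) * P⁻¹ := by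
        simp only [Matrix.mul_assoc]
        rw [← Matrix.mul_assoc (ctrans q P), hPP, Matrix.one_mul]
    _ = 1 := by
      rw [diagLast_zero_add_smul_outerq_mul_blkMat hσ hyn hz hlam, Matrix.mul_one,
        mul_nonsing_inv _ hP]

theorem ctrans_mul_blkMat_mul_eq (hσ : ∀ a, σ a = a ^ q) (hq : ∀ a : F, (a ^ q) ^ q = a)
    (Q : Matrix (Fin m ⊕ Unit) (Fin m ⊕ Unit) F) (c : F) :
    ctrans q Q * blkMat q m z c * Q =
      ctrans q Q * blkMat q m z 0 * Q +
        c • outerq q (ctrans q Q *ᵥ Pi.single (Sum.inr ()) 1) := by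
  rw [outerq_mulVec hσ, ctrans_ctrans hq, blkMat_eq_add_smul_outerq hσ, Matrix.mul_add,
    Matrix.add_mul, Matrix.mul_smul, Matrix.smul_mul]

theorem rank_ctrans_inv_mul_blkMat_zero_mul_inv (hσ : ∀ a, σ a = a ^ q)
    {P : Matrix (Fin m ⊕ Unit) (Fin m ⊕ Unit) F} (hP : IsUnit P.det) :
    (ctrans q P⁻¹ * blkMat q m z 0 * P⁻¹).rank = m := by
  have hQ : IsUnit (shear z * P⁻¹).det := by
    rw [det_mul]
    exact (isUnit_det_shear z).mul (isUnit_nonsing_inv_det _ hP)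
  rw [blkMat_eq_ctrans_shear_mul hσ, show ctrans q P⁻¹ * (ctrans q (shear z) * diagLast m 0 *
      shear z) * P⁻¹ = ctrans q (shear z * P⁻¹) * diagLast m 0 * (shear z * P⁻¹) by
    simp only [ctrans_mul hσ, Matrix.mul_assoc],
    rank_mul_eq_left_of_isUnit_det _ _ hQ,
    rank_mul_eq_right_of_isUnit_det _ _ (isUnit_det_ctrans hσ hQ), rank_diagLast_zero]

end inverse

theorem image_inv_leafSet {q : ℕ} {F : Type*} [Field F] {n : Type*} [Fintype n]
    [DecidableEq n] {A N : Matrix n n F} {x w : n → F} {r : F} (hr : r ^ q = r) (hr0 : r ≠ 0)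
    (h : ∀ lam : F, lam ^ q = lam → lam ≠ 0 →
      (A + lam • outerq q x)⁻¹ = N + (lam * r)⁻¹ • outerq q w) :
    (fun C => C⁻¹) '' leafSet q A x = leafSet q N w := by
  ext B
  constructor
  · rintro ⟨_, ⟨lam, hlq, hl0, rfl⟩, rfl⟩
    exact ⟨(lam * r)⁻¹, by rw [inv_pow, mul_pow, hlq, hr], by simp [hl0, hr0], h lam hlq hl0⟩
  · rintro ⟨mu, hmq, hm0, rfl⟩
    have hmr : (mu * r)⁻¹ ^ q = (mu * r)⁻¹ := by rw [inv_pow, mul_pow, hmq, hr]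
    refine ⟨_, ⟨(mu * r)⁻¹, hmr, by simp [hm0, hr0], rfl⟩, ?_⟩
    show (A + (mu * r)⁻¹ • outerq q x)⁻¹ = _
    rw [h _ hmr (by simp [hm0, hr0]), mul_inv, inv_inv, mul_inv_cancel_right₀ hr0]

theorem stmt6_general (q m : ℕ)
    (F : Type*) [Field F] [Fintype F] (hF : Fintype.card F = q ^ 2)
    (P : Matrix (Fin m ⊕ Unit) (Fin m ⊕ Unit) F) (hP : IsUnit P)
    (A : Matrix (Fin m ⊕ Unit) (Fin m ⊕ Unit) F)
    (hA : A = P * Matrix.fromBlocks (1 : Matrix (Fin m) (Fin m) F) 0 0 0 * ctrans q P)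
    (y x : Fin m ⊕ Unit → F) (hx : x = P *ᵥ y) (hyn : y (Sum.inr ()) ≠ 0)
    (z : Fin m → F) (hz : ∀ i, z i = -(y (Sum.inl i)) / y (Sum.inr ())) :
    (∀ lam : F, lam ^ q = lam → lam ≠ 0 →
      IsUnit (A + lam • outerq q x) ∧
      (A + lam • outerq q x)⁻¹ =
        ctrans q P⁻¹ *
          blkMat q m z ((lam * (y (Sum.inr ()) * (y (Sum.inr ())) ^ q))⁻¹) * P⁻¹) ∧
    (3 ≤ q → (∀ B ∈ leafSet q A x, B.rank = m + 1) →
      (ctrans q P⁻¹ * blkMat q m z 0 * P⁻¹).rank = m ∧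
      (fun C => C⁻¹) '' leafSet q A x =
        leafSet q (ctrans q P⁻¹ * blkMat q m z 0 * P⁻¹)
          (ctrans q P⁻¹ *ᵥ Pi.single (Sum.inr ()) 1) ∧
      IsLeafOf q ((fun C => C⁻¹) '' leafSet q A x)
        (ctrans q P⁻¹ * blkMat q m z 0 * P⁻¹)) := by
  obtain ⟨σ, hσ⟩ := exists_ringHom_eq_pow_of_card_eq_sq hF
  have hinvol := pow_pow_eq_self_of_card_eq_sq hF
  have hPdet := (isUnit_iff_isUnit_det P).mp hP
  rw [← diagLast_zero] at hA
  subst hA hx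
  have hinv (lam : F) (hlam : lam ≠ 0) := add_smul_outerq_mulVec_mul_eq_one hσ hPdet hyn hz hlam
  have hunit (lam : F) (hlam : lam ≠ 0) :=
    (isUnit_iff_isUnit_det _).mpr (isUnit_det_of_right_inverse (hinv lam hlam))
  refine ⟨fun lam _ hlam => ⟨hunit lam hlam, inv_eq_right_inv (hinv lam hlam)⟩,
    fun _ _ => ?_⟩
  have hset := image_inv_leafSet (x := P *ᵥ y) (r := y (Sum.inr ()) * y (Sum.inr ()) ^ q)
    (by rw [mul_pow, hinvol, mul_comm]) (mul_ne_zero hyn (pow_ne_zero _ hyn))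
    fun lam _ hlam => by
      rw [inv_eq_right_inv (hinv lam hlam), ctrans_mul_blkMat_mul_eq hσ hinvol]
  have hw : ctrans q P⁻¹ *ᵥ Pi.single (Sum.inr ()) 1 ≠ 0 := fun h =>
    (isUnit_det_ctrans hσ (isUnit_nonsing_inv_det _ hPdet)).ne_zero <|
      exists_mulVec_eq_zero_iff.1 ⟨_, Pi.single_ne_zero_iff.2 one_ne_zero, h⟩
  have hrank := rank_ctrans_inv_mul_blkMat_zero_mul_inv (z := z) hσ hPdet
  refine ⟨hrank, hset, _, hw, hset, ?_⟩
  rintro _ ⟨C, ⟨lam, -, hlam, rfl⟩, rfl⟩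
  rw [rank_of_isUnit _ (isUnit_nonsing_inv_iff.2 (hunit lam hlam)), hrank, Fintype.card_sum,
    Fintype.card_fin, Fintype.card_unit]

/-- **Lemma 3.1 (i).** With `A = P (I_{n−1} ⊕ 0) P*`, `x = P y`, `yₙ ≠ 0`, and
`z = (−y₁/yₙ, …, −y_{n−1}/yₙ)`:  for `0 ≠ λ ∈ F_q` the matrix `A + λ x x*` is invertible
with inverse `(P⁻¹)* [[I, z], [z*, z*z + (λ yₙ ȳₙ)⁻¹]] P⁻¹`; moreover if `q ≥ 3` and
`L = {A + λ x x* : 0 ≠ λ ∈ F_q}` is a leaf of `A`, then `L⁻¹` is a leaf of the rank `n−1`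
matrix `(P⁻¹)* [[I, z], [z*, z*z]] P⁻¹`, generated by the vector `(P⁻¹)* eₙ`. -/
theorem stmt6 (q m : ℕ) (hq : IsPrimePow q)
    (F : Type*) [Field F] [Fintype F] (hF : Fintype.card F = q ^ 2)
    (P : Matrix (Fin m ⊕ Unit) (Fin m ⊕ Unit) F) (hP : IsUnit P)
    (A : Matrix (Fin m ⊕ Unit) (Fin m ⊕ Unit) F)
    (hA : A = P * Matrix.fromBlocks (1 : Matrix (Fin m) (Fin m) F) 0 0 0 * ctrans q P)
    (y x : Fin m ⊕ Unit → F) (hx : x = P *ᵥ y) (hyn : y (Sum.inr ()) ≠ 0)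
    (z : Fin m → F) (hz : ∀ i, z i = -(y (Sum.inl i)) / y (Sum.inr ())) :
    (∀ lam : F, lam ^ q = lam → lam ≠ 0 →
      IsUnit (A + lam • outerq q x) ∧
      (A + lam • outerq q x)⁻¹ =
        ctrans q P⁻¹ *
          blkMat q m z ((lam * (y (Sum.inr ()) * (y (Sum.inr ())) ^ q))⁻¹) * P⁻¹) ∧
    (3 ≤ q → (∀ B ∈ leafSet q A x, B.rank = m + 1) →
      (ctrans q P⁻¹ * blkMat q m z 0 * P⁻¹).rank = m ∧
      (fun C => C⁻¹) '' leafSet q A x =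
        leafSet q (ctrans q P⁻¹ * blkMat q m z 0 * P⁻¹)
          (ctrans q P⁻¹ *ᵥ Pi.single (Sum.inr ()) 1) ∧
      IsLeafOf q ((fun C => C⁻¹) '' leafSet q A x)
        (ctrans q P⁻¹ * blkMat q m z 0 * P⁻¹)) :=
  stmt6_general q m F hF P hP A hA y x hx hyn z hz
end
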